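/- Let F be a disc preserving Möbius transformation that is not a rotation, with contraction interval U = {x ∈ 𝕋 : |F'(x)| < 1} and expansion interval V = {x ∈ 𝕋 : |(F⁻¹)'(x)| > 1}. Then F(U) = V and the (circle-arc) lengths satisfy |U| + |V| = 2π and |V| < π. -/

import Mathlib

open Complex Real Set MeasureTheory

/-- The disc preserving Möbius transformation with normalized matrix
`[[α, β], [conj β, conj α]]`, as a map of `ℂ`. -/
noncomputable def discMT (α β : ℂ) : ℂ → ℂ :=
  fun z => (α * z + β) / ((starRingEnd ℂ) β * z + (starRingEnd ℂ) α)

/-- The inverse transformation, with matrix `[[conj α, -β], [-conj β, α]]`. -/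
noncomputable def discMTinv (α β : ℂ) : ℂ → ℂ :=
  fun z => ((starRingEnd ℂ) α * z - β) / (-(starRingEnd ℂ) β * z + α)

/-- The contraction interval `U = {x ∈ 𝕋 : |F'(x)| < 1}`. -/
noncomputable def contrInt (α β : ℂ) : Set ℂ :=
  {x : ℂ | ‖x‖ = 1 ∧ ‖deriv (discMT α β) x‖ < 1}

/-- The expansion interval `V = {x ∈ 𝕋 : |(F⁻¹)'(x)| > 1}`. -/
noncomputable def expInt (α β : ℂ) : Set ℂ :=
  {x : ℂ | ‖x‖ = 1 ∧ 1 < ‖deriv (discMTinv α β) x‖}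

/-- The arc length of a subset of the unit circle. -/
noncomputable def arcLength (S : Set ℂ) : ENNReal :=
  volume {θ : ℝ | θ ∈ Ico 0 (2 * π) ∧ Complex.exp (θ * Complex.I) ∈ S}

/- ## Measure-theoretic lemmas -/

lemma cos_set_inter_Ioc (s : ℝ) (hs1 : -1 < s) (hs2 : s < 1) :
    {u : ℝ | s < Real.cos u} ∩ Ioc 0 (0 + 2 * π)
      = Ioo 0 (Real.arccos s) ∪ Ioc (2 * π - Real.arccos s) (2 * π) := by
  have ha0 : 0 < Real.arccos s := Real.arccos_pos.2 hs2
  have haπ : Real.arccos s < π :=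
    (Real.arccos_le_pi s).lt_of_ne fun he => absurd (Real.arccos_eq_pi.1 he) (by linarith)
  have hcos : Real.cos (Real.arccos s) = s := Real.cos_arccos hs1.le hs2.le
  have hπ := Real.pi_pos
  ext u
  simp only [mem_inter_iff, mem_setOf_eq, mem_Ioc, mem_union, mem_Ioo, zero_add]
  constructor
  · rintro ⟨hcu, hu0, hu2⟩
    rcases le_or_gt u π with hle | hlt
    · left
      refine ⟨hu0, ?_⟩
      by_contra hba
      push_neg at hba
      have : Real.cos u ≤ Real.cos (Real.arccos s) := by
        rcases eq_or_lt_of_le hba with he | hl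
        · rw [← he]
        · exact (Real.strictAntiOn_cos ⟨ha0.le, haπ.le⟩ ⟨hu0.le, hle⟩ hl).le
      rw [hcos] at this; linarith
    · right
      refine ⟨?_, hu2⟩
      by_contra hba
      push_neg at hba
      have h2u : Real.cos (2 * π - u) = Real.cos u := by
        rw [Real.cos_sub]; simp [Real.cos_two_pi, Real.sin_two_pi]
      have h2um : (2 * π - u) ∈ Icc 0 π := ⟨by linarith, by linarith⟩
      have harc : Real.arccos s ≤ 2 * π - u := by linarith
      have : Real.cos (2 * π - u) ≤ Real.cos (Real.arccos s) := by
        rcases eq_or_lt_of_le harc with he | hl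
        · rw [he]
        · exact (Real.strictAntiOn_cos ⟨ha0.le, haπ.le⟩ h2um hl).le
      rw [hcos, h2u] at this; linarith
  · rintro (⟨hu0, hua⟩ | ⟨hua, hu2⟩)
    · refine ⟨?_, hu0, by linarith⟩
      have : Real.cos (Real.arccos s) < Real.cos u :=
        Real.strictAntiOn_cos ⟨hu0.le, by linarith⟩ ⟨ha0.le, haπ.le⟩ hua
      rw [hcos] at this; exact this
    · refine ⟨?_, by linarith, hu2⟩
      have h2u : Real.cos (2 * π - u) = Real.cos u := by
        rw [Real.cos_sub]; simp [Real.cos_two_pi, Real.sin_two_pi]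
      have : Real.cos (Real.arccos s) < Real.cos (2 * π - u) :=
        Real.strictAntiOn_cos ⟨by linarith, by linarith⟩ ⟨ha0.le, haπ.le⟩ (by linarith)
      rw [hcos, h2u] at this; exact this

lemma volume_inter_Ico_eq_Ioc (A : Set ℝ) (a b : ℝ) :
    volume (A ∩ Ico a b) = volume (A ∩ Ioc a b) := by
  rcases le_or_gt b a with hba | hab
  · rw [Ico_eq_empty (by simpa using hba), Ioc_eq_empty (by simpa using hba.not_gt)]
  apply le_antisymm
  · calc volume (A ∩ Ico a b) ≤ volume ((A ∩ Ioc a b) ∪ {a}) := by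
          apply measure_mono
          rintro x ⟨hxA, hx1, hx2⟩
          rcases eq_or_lt_of_le hx1 with he | hl
          · right; simp [← he]
          · left; exact ⟨hxA, hl, hx2.le⟩
      _ ≤ volume (A ∩ Ioc a b) + volume ({a} : Set ℝ) := measure_union_le _ _
      _ = volume (A ∩ Ioc a b) := by simp
  · calc volume (A ∩ Ioc a b) ≤ volume ((A ∩ Ico a b) ∪ {b}) := by
          apply measure_mono
          rintro x ⟨hxA, hx1, hx2⟩
          rcases eq_or_lt_of_le hx2 with he | hl
          · right; simp [he]
          · left; exact ⟨hxA, hx1.le, hl⟩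
      _ ≤ volume (A ∩ Ico a b) + volume ({b} : Set ℝ) := measure_union_le _ _
      _ = volume (A ∩ Ico a b) := by simp

lemma measure_cos_arc (s : ℝ) (hs1 : -1 < s) (hs2 : s < 1) (φ : ℝ) :
    volume {θ : ℝ | θ ∈ Ico 0 (2 * π) ∧ s < Real.cos (θ + φ)}
      = ENNReal.ofReal (2 * Real.arccos s) := by
  have hπ := Real.pi_pos
  set A := {u : ℝ | s < Real.cos u} with hA
  have hAm : MeasurableSet A := measurableSet_lt measurable_const Real.continuous_cos.measurable
  have h1 : {θ : ℝ | θ ∈ Ico 0 (2 * π) ∧ s < Real.cos (θ + φ)}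
      = (· + φ) ⁻¹' (A ∩ Ico φ (φ + 2 * π)) := by
    ext θ
    simp only [mem_setOf_eq, mem_Ico, mem_preimage, mem_inter_iff, hA]
    constructor
    · rintro ⟨⟨h1, h2⟩, h3⟩; exact ⟨h3, by linarith, by linarith⟩
    · rintro ⟨h3, h1, h2⟩; exact ⟨⟨by linarith, by linarith⟩, h3⟩
  rw [h1, measure_preimage_add_right, volume_inter_Ico_eq_Ioc]
  have hfd1 := isAddFundamentalDomain_Ioc Real.two_pi_pos φ volume
  have hfd2 := isAddFundamentalDomain_Ioc Real.two_pi_pos 0 volume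
  have hinv : ∀ g : AddSubgroup.zmultiples (2 * π), (fun x => g +ᵥ x) ⁻¹' A = A := by
    rintro ⟨g, hg⟩
    obtain ⟨n, rfl⟩ := hg
    ext u
    simp only [mem_preimage, mem_setOf_eq, hA, AddSubgroup.vadd_def, vadd_eq_add,
      AddSubgroup.coe_mk]
    rw [show ((n • (2 * π) : ℝ) + u) = u + n * (2 * π) by push_cast [zsmul_eq_mul]; ring,
      Real.cos_add_int_mul_two_pi]
  have heq := hfd1.measure_set_eq hfd2 hAm hinv
  rw [show φ + 2 * π = φ + 2 * π by ring] at heq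
  rw [heq, cos_set_inter_Ioc s hs1 hs2]
  have ha0 : 0 < Real.arccos s := Real.arccos_pos.2 hs2
  have haπ : Real.arccos s < π :=
    (Real.arccos_le_pi s).lt_of_ne fun he => absurd (Real.arccos_eq_pi.1 he) (by linarith)
  have hdisj : Disjoint (Ioo 0 (Real.arccos s)) (Ioc (2 * π - Real.arccos s) (2 * π)) := by
    rw [Set.disjoint_left]
    rintro x ⟨hx1, hx2⟩ ⟨hy1, hy2⟩
    linarith
  rw [measure_union hdisj measurableSet_Ioc, Real.volume_Ioo, Real.volume_Ioc,
    ← ENNReal.ofReal_add (by linarith) (by linarith)]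
  congr 1
  ring

lemma re_mul_exp (c : ℂ) (θ : ℝ) :
    (c * Complex.exp (θ * Complex.I)).re = ‖c‖ * Real.cos (θ + c.arg) := by
  have h1 := Complex.norm_mul_cos_arg c
  have h2 := Complex.norm_mul_sin_arg c
  rw [Complex.exp_mul_I]
  simp only [Complex.mul_re, Complex.add_re, Complex.add_im, Complex.mul_im,
    Complex.cos_ofReal_re, Complex.cos_ofReal_im, Complex.sin_ofReal_re, Complex.sin_ofReal_im,
    Complex.I_re, Complex.I_im]
  rw [Real.cos_add]
  linear_combination -Real.cos θ * h1 + Real.sin θ * h2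

lemma arc_measure (c : ℂ) (t : ℝ) (h1 : -‖c‖ < t) (h2 : t < ‖c‖) :
    volume {θ : ℝ | θ ∈ Ico 0 (2 * π) ∧ t < (c * Complex.exp (θ * Complex.I)).re}
      = ENNReal.ofReal (2 * Real.arccos (t / ‖c‖)) := by
  have hc : 0 < ‖c‖ := by nlinarith [norm_nonneg c]
  have hset : {θ : ℝ | θ ∈ Ico 0 (2 * π) ∧ t < (c * Complex.exp (θ * Complex.I)).re}
      = {θ : ℝ | θ ∈ Ico 0 (2 * π) ∧ t / ‖c‖ < Real.cos (θ + c.arg)} := by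
    ext θ
    rw [mem_setOf_eq, mem_setOf_eq, re_mul_exp, div_lt_iff₀ hc]
    constructor <;> rintro ⟨hθ, hlt⟩ <;> exact ⟨hθ, by linarith [hlt]⟩
  rw [hset]
  exact measure_cos_arc _ (by rw [lt_div_iff₀ hc]; linarith) (by rw [div_lt_one hc]; linarith) _

/- ## Complex-analytic lemmas -/

section MT
variable (α β : ℂ)

lemma mul_conj_one (h : ‖α‖ ^ 2 - ‖β‖ ^ 2 = 1) :
    α * (starRingEnd ℂ) α - β * (starRingEnd ℂ) β = 1 := by
  rw [Complex.mul_conj', Complex.mul_conj']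
  exact_mod_cast congrArg (Complex.ofReal) h

variable {α β}

lemma D_ne (h : ‖α‖ ^ 2 - ‖β‖ ^ 2 = 1) {x : ℂ} (hx : ‖x‖ = 1) :
    (starRingEnd ℂ) β * x + (starRingEnd ℂ) α ≠ 0 := by
  intro h0
  have h1 : ‖(starRingEnd ℂ) β * x‖ = ‖(starRingEnd ℂ) α‖ := by
    rw [eq_neg_of_add_eq_zero_left h0, norm_neg]
  rw [norm_mul, RCLike.norm_conj, RCLike.norm_conj, hx, mul_one] at h1
  rw [h1] at h; simp at h

lemma E_ne (h : ‖α‖ ^ 2 - ‖β‖ ^ 2 = 1) {y : ℂ} (hy : ‖y‖ = 1) :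
    -(starRingEnd ℂ) β * y + α ≠ 0 := by
  intro h0
  have h1 : ‖-(starRingEnd ℂ) β * y‖ = ‖α‖ := by
    rw [eq_neg_of_add_eq_zero_left h0, norm_neg]
  rw [norm_mul, norm_neg, RCLike.norm_conj, hy, mul_one] at h1
  rw [h1] at h; simp at h

lemma deriv_discMT (h : ‖α‖ ^ 2 - ‖β‖ ^ 2 = 1) {x : ℂ}
    (hx : (starRingEnd ℂ) β * x + (starRingEnd ℂ) α ≠ 0) :
    deriv (discMT α β) x = (((starRingEnd ℂ) β * x + (starRingEnd ℂ) α) ^ 2)⁻¹ := by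
  have h1 : HasDerivAt (fun z : ℂ => α * z + β) α x := by
    simpa using ((hasDerivAt_id x).const_mul α).add_const β
  have h2 : HasDerivAt (fun z : ℂ => (starRingEnd ℂ) β * z + (starRingEnd ℂ) α)
      ((starRingEnd ℂ) β) x := by
    simpa using ((hasDerivAt_id x).const_mul ((starRingEnd ℂ) β)).add_const ((starRingEnd ℂ) α)
  have hd := (h1.div h2 hx).deriv
  rw [show discMT α β = (fun z : ℂ => α * z + β) / (fun z : ℂ => (starRingEnd ℂ) β * z + (starRingEnd ℂ) α) from rfl,
    hd]
  have hnum : α * ((starRingEnd ℂ) β * x + (starRingEnd ℂ) α)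
      - (α * x + β) * (starRingEnd ℂ) β = 1 := by
    linear_combination mul_conj_one α β h
  rw [hnum, one_div]

lemma deriv_discMTinv (h : ‖α‖ ^ 2 - ‖β‖ ^ 2 = 1) {y : ℂ}
    (hy : -(starRingEnd ℂ) β * y + α ≠ 0) :
    deriv (discMTinv α β) y = ((-(starRingEnd ℂ) β * y + α) ^ 2)⁻¹ := by
  have h1 : HasDerivAt (fun z : ℂ => (starRingEnd ℂ) α * z - β) ((starRingEnd ℂ) α) y := by
    simpa using ((hasDerivAt_id y).const_mul ((starRingEnd ℂ) α)).sub_const β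
  have h2 : HasDerivAt (fun z : ℂ => -(starRingEnd ℂ) β * z + α) (-(starRingEnd ℂ) β) y := by
    simpa using ((hasDerivAt_id y).const_mul (-(starRingEnd ℂ) β)).add_const α
  have hd := (h1.div h2 hy).deriv
  rw [show discMTinv α β
      = (fun z : ℂ => (starRingEnd ℂ) α * z - β) / (fun z : ℂ => -(starRingEnd ℂ) β * z + α) from rfl, hd]
  have hnum : (starRingEnd ℂ) α * (-(starRingEnd ℂ) β * y + α)
      - ((starRingEnd ℂ) α * y - β) * (-(starRingEnd ℂ) β) = 1 := by
    linear_combination mul_conj_one α β h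
  rw [hnum, one_div]

lemma mem_contr_iff (h : ‖α‖ ^ 2 - ‖β‖ ^ 2 = 1) {x : ℂ} :
    x ∈ contrInt α β ↔ ‖x‖ = 1 ∧ 1 < ‖(starRingEnd ℂ) β * x + (starRingEnd ℂ) α‖ := by
  unfold contrInt
  rw [mem_setOf_eq]
  refine and_congr_right fun hx => ?_
  have hD := D_ne h hx
  rw [deriv_discMT h hD, norm_inv, norm_pow]
  have hDpos : 0 < ‖(starRingEnd ℂ) β * x + (starRingEnd ℂ) α‖ := norm_pos_iff.2 hD
  constructor
  · intro hlt
    have h2 : 1 < ‖(starRingEnd ℂ) β * x + (starRingEnd ℂ) α‖ ^ 2 := by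
      rcases inv_lt_one_iff₀.1 hlt with hle | hgt
      · nlinarith
      · exact hgt
    nlinarith
  · intro hlt
    rw [inv_lt_one_iff₀]
    right
    nlinarith

lemma mem_exp_iff (h : ‖α‖ ^ 2 - ‖β‖ ^ 2 = 1) {y : ℂ} :
    y ∈ expInt α β ↔ ‖y‖ = 1 ∧ ‖-(starRingEnd ℂ) β * y + α‖ < 1 := by
  unfold expInt
  rw [mem_setOf_eq]
  refine and_congr_right fun hy => ?_
  have hE := E_ne h hy
  rw [deriv_discMTinv h hE, norm_inv, norm_pow]
  have hEpos : 0 < ‖-(starRingEnd ℂ) β * y + α‖ := norm_pos_iff.2 hE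
  rw [one_lt_inv_iff₀]
  constructor
  · rintro ⟨-, hlt⟩
    nlinarith
  · intro hlt
    exact ⟨pow_pos hEpos 2, by nlinarith⟩


lemma norm_D_iff (h : ‖α‖ ^ 2 - ‖β‖ ^ 2 = 1) {x : ℂ} (hx : ‖x‖ = 1) :
    1 < ‖(starRingEnd ℂ) β * x + (starRingEnd ℂ) α‖
      ↔ -(‖β‖ ^ 2) < (α * (starRingEnd ℂ) β * x).re := by
  have hxsq : Complex.normSq x = 1 := by
    rw [Complex.normSq_eq_norm_sq, hx]; norm_num
  have hns : Complex.normSq ((starRingEnd ℂ) β * x + (starRingEnd ℂ) α)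
      = ‖β‖ ^ 2 + ‖α‖ ^ 2 + 2 * (α * (starRingEnd ℂ) β * x).re := by
    rw [Complex.normSq_add, Complex.normSq_mul, Complex.normSq_conj, Complex.normSq_conj,
      hxsq, show (starRingEnd ℂ) β * x * (starRingEnd ℂ) ((starRingEnd ℂ) α)
        = α * (starRingEnd ℂ) β * x by rw [Complex.conj_conj]; ring,
      Complex.normSq_eq_norm_sq, Complex.normSq_eq_norm_sq]
    ring
  have hsq : ‖(starRingEnd ℂ) β * x + (starRingEnd ℂ) α‖ ^ 2
      = ‖β‖ ^ 2 + ‖α‖ ^ 2 + 2 * (α * (starRingEnd ℂ) β * x).re := by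
    rw [Complex.sq_norm, hns]
  constructor
  · intro h1
    have := norm_nonneg ((starRingEnd ℂ) β * x + (starRingEnd ℂ) α)
    nlinarith
  · intro h1
    have := norm_nonneg ((starRingEnd ℂ) β * x + (starRingEnd ℂ) α)
    nlinarith

lemma norm_E_iff (h : ‖α‖ ^ 2 - ‖β‖ ^ 2 = 1) {y : ℂ} (hy : ‖y‖ = 1) :
    ‖-(starRingEnd ℂ) β * y + α‖ < 1
      ↔ ‖β‖ ^ 2 < ((starRingEnd ℂ) α * (starRingEnd ℂ) β * y).re := by
  have hysq : Complex.normSq y = 1 := by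
    rw [Complex.normSq_eq_norm_sq, hy]; norm_num
  have hns : Complex.normSq (-(starRingEnd ℂ) β * y + α)
      = ‖β‖ ^ 2 + ‖α‖ ^ 2 - 2 * ((starRingEnd ℂ) α * (starRingEnd ℂ) β * y).re := by
    rw [Complex.normSq_add, Complex.normSq_mul, Complex.normSq_neg, Complex.normSq_conj, hysq,
      show -(starRingEnd ℂ) β * y * (starRingEnd ℂ) α
        = -((starRingEnd ℂ) α * (starRingEnd ℂ) β * y) by ring, Complex.neg_re,
      Complex.normSq_eq_norm_sq, Complex.normSq_eq_norm_sq]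
    ring
  have hsq : ‖-(starRingEnd ℂ) β * y + α‖ ^ 2
      = ‖β‖ ^ 2 + ‖α‖ ^ 2 - 2 * ((starRingEnd ℂ) α * (starRingEnd ℂ) β * y).re := by
    rw [Complex.sq_norm, hns]
  constructor
  · intro h1
    have := norm_nonneg (-(starRingEnd ℂ) β * y + α)
    nlinarith
  · intro h1
    have := norm_nonneg (-(starRingEnd ℂ) β * y + α)
    nlinarith

end MT
/-- for a non-rotation disc preserving Möbius transformation `F`,
`F(U) = V`, `|U| + |V| = 2π` and `|V| < π`. -/
theorem stmt_4 (α β : ℂ) (h : ‖α‖ ^ 2 - ‖β‖ ^ 2 = 1) (hβ : β ≠ 0) :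
    discMT α β '' contrInt α β = expInt α β ∧
    arcLength (contrInt α β) + arcLength (expInt α β) = ENNReal.ofReal (2 * π) ∧
    arcLength (expInt α β) < ENNReal.ofReal π := by
  have hc := mul_conj_one α β h
  have hβpos : 0 < ‖β‖ := norm_pos_iff.2 hβ
  have hαβ : ‖β‖ < ‖α‖ := by nlinarith [norm_nonneg α, norm_nonneg β]
  have hαpos : 0 < ‖α‖ := hβpos.trans hαβ
  have hU : arcLength (contrInt α β) = ENNReal.ofReal (2 * Real.arccos (-(‖β‖ / ‖α‖))) := by
    have hset : {θ : ℝ | θ ∈ Ico 0 (2 * π) ∧ Complex.exp (θ * Complex.I) ∈ contrInt α β}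
        = {θ : ℝ | θ ∈ Ico 0 (2 * π)
            ∧ -(‖β‖ ^ 2) < (α * (starRingEnd ℂ) β * Complex.exp (θ * Complex.I)).re} := by
      ext θ
      simp only [mem_setOf_eq, and_congr_right_iff]
      intro hθ
      have hex : ‖Complex.exp (θ * Complex.I)‖ = 1 := by
        rw [Complex.norm_exp]
        simp
      rw [mem_contr_iff h, norm_D_iff h hex]
      simp [hex]
    rw [arcLength, hset]
    have hcnorm : ‖α * (starRingEnd ℂ) β‖ = ‖α‖ * ‖β‖ := by
      rw [norm_mul, RCLike.norm_conj]
    have := arc_measure (α * (starRingEnd ℂ) β) (-(‖β‖ ^ 2))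
      (by rw [hcnorm]; nlinarith) (by rw [hcnorm]; nlinarith)
    rw [this, hcnorm, show -(‖β‖ ^ 2) / (‖α‖ * ‖β‖) = -(‖β‖ / ‖α‖) by
      rw [neg_div, sq, mul_comm ‖α‖ ‖β‖, mul_div_mul_left _ _ hβpos.ne']]
  have hV : arcLength (expInt α β) = ENNReal.ofReal (2 * Real.arccos (‖β‖ / ‖α‖)) := by
    have hset : {θ : ℝ | θ ∈ Ico 0 (2 * π) ∧ Complex.exp (θ * Complex.I) ∈ expInt α β}
        = {θ : ℝ | θ ∈ Ico 0 (2 * π)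
            ∧ ‖β‖ ^ 2 < ((starRingEnd ℂ) α * (starRingEnd ℂ) β
                * Complex.exp (θ * Complex.I)).re} := by
      ext θ
      simp only [mem_setOf_eq, and_congr_right_iff]
      intro hθ
      have hex : ‖Complex.exp (θ * Complex.I)‖ = 1 := by
        rw [Complex.norm_exp]
        simp
      rw [mem_exp_iff h, norm_E_iff h hex]
      simp [hex]
    rw [arcLength, hset]
    have hcnorm : ‖(starRingEnd ℂ) α * (starRingEnd ℂ) β‖ = ‖α‖ * ‖β‖ := by
      rw [norm_mul, RCLike.norm_conj, RCLike.norm_conj]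
    have := arc_measure ((starRingEnd ℂ) α * (starRingEnd ℂ) β) (‖β‖ ^ 2)
      (by rw [hcnorm]; nlinarith) (by rw [hcnorm]; nlinarith)
    rw [this, hcnorm, show ‖β‖ ^ 2 / (‖α‖ * ‖β‖) = ‖β‖ / ‖α‖ by
      rw [sq, mul_comm ‖α‖ ‖β‖, mul_div_mul_left _ _ hβpos.ne']]
  refine ⟨?_, ?_, ?_⟩
  · -- image statement
    ext y
    constructor
    · rintro ⟨x, hx, rfl⟩
      rw [mem_contr_iff h] at hx
      obtain ⟨hx1, hx2⟩ := hx
      have hD : (starRingEnd ℂ) β * x + (starRingEnd ℂ) α ≠ 0 := D_ne h hx1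
      have hnorm : ‖α * x + β‖ = ‖(starRingEnd ℂ) β * x + (starRingEnd ℂ) α‖ := by
        have hxsq : Complex.normSq x = 1 := by
          rw [Complex.normSq_eq_norm_sq, hx1]; norm_num
        have hnsq : Complex.normSq (α * x + β)
            = Complex.normSq ((starRingEnd ℂ) β * x + (starRingEnd ℂ) α) := by
          rw [Complex.normSq_add, Complex.normSq_add, Complex.normSq_mul, Complex.normSq_mul,
            Complex.normSq_conj, hxsq,
            show α * x * (starRingEnd ℂ) β = (starRingEnd ℂ) β * x * (starRingEnd ℂ) ((starRingEnd ℂ) α) by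
              rw [Complex.conj_conj]; ring]
          rw [Complex.normSq_conj]
          ring
        rw [Complex.norm_def, Complex.norm_def, hnsq]
      have hFnorm : ‖discMT α β x‖ = 1 := by
        rw [show discMT α β x
          = (α * x + β) / ((starRingEnd ℂ) β * x + (starRingEnd ℂ) α) from rfl, norm_div, hnorm,
          div_self (norm_ne_zero_iff.2 hD)]
      have hEval : -(starRingEnd ℂ) β * discMT α β x + α
          = ((starRingEnd ℂ) β * x + (starRingEnd ℂ) α)⁻¹ := by
        rw [show discMT α β x
          = (α * x + β) / ((starRingEnd ℂ) β * x + (starRingEnd ℂ) α) from rfl]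
        field_simp
        linear_combination hc
      rw [mem_exp_iff h]
      refine ⟨hFnorm, ?_⟩
      rw [hEval, norm_inv]
      rw [inv_lt_one_iff₀]
      right
      exact hx2
    · intro hy
      rw [mem_exp_iff h] at hy
      obtain ⟨hy1, hy2⟩ := hy
      have hE : -(starRingEnd ℂ) β * y + α ≠ 0 := E_ne h hy1
      have hxnorm : ‖discMTinv α β y‖ = 1 := by
        have hysq : Complex.normSq y = 1 := by
          rw [Complex.normSq_eq_norm_sq, hy1]; norm_num
        have hnsq : Complex.normSq ((starRingEnd ℂ) α * y - β)
            = Complex.normSq (-(starRingEnd ℂ) β * y + α) := by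
          rw [sub_eq_add_neg, Complex.normSq_add, Complex.normSq_add, Complex.normSq_mul,
            Complex.normSq_mul, Complex.normSq_conj, Complex.normSq_neg, Complex.normSq_neg,
            Complex.normSq_conj, hysq,
            show (starRingEnd ℂ) α * y * (starRingEnd ℂ) (-β)
              = -(starRingEnd ℂ) β * y * (starRingEnd ℂ) α by rw [map_neg]; ring]
          ring
        have hnorm2 : ‖(starRingEnd ℂ) α * y - β‖ = ‖-(starRingEnd ℂ) β * y + α‖ := by
          rw [Complex.norm_def, Complex.norm_def, hnsq]
        rw [show discMTinv α β y
          = ((starRingEnd ℂ) α * y - β) / (-(starRingEnd ℂ) β * y + α) from rfl, norm_div,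
          hnorm2, div_self (norm_ne_zero_iff.2 hE)]
      have hDx : (starRingEnd ℂ) β * discMTinv α β y + (starRingEnd ℂ) α
          = (-(starRingEnd ℂ) β * y + α)⁻¹ := by
        rw [show discMTinv α β y
          = ((starRingEnd ℂ) α * y - β) / (-(starRingEnd ℂ) β * y + α) from rfl]
        rw [mul_div_assoc', div_add' _ _ _ hE,
          show (starRingEnd ℂ) β * ((starRingEnd ℂ) α * y - β)
              + (starRingEnd ℂ) α * (-(starRingEnd ℂ) β * y + α) = 1 from by
            linear_combination hc, one_div]
      have hNum : α * discMTinv α β y + β = y * (-(starRingEnd ℂ) β * y + α)⁻¹ := by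
        rw [show discMTinv α β y
          = ((starRingEnd ℂ) α * y - β) / (-(starRingEnd ℂ) β * y + α) from rfl]
        rw [mul_div_assoc', div_add' _ _ _ hE,
          show α * ((starRingEnd ℂ) α * y - β) + β * (-(starRingEnd ℂ) β * y + α) = y from by
            linear_combination y * hc, div_eq_mul_inv]
      refine ⟨discMTinv α β y, ?_, ?_⟩
      · rw [mem_contr_iff h]
        refine ⟨hxnorm, ?_⟩
        rw [hDx, norm_inv]
        exact one_lt_inv_iff₀.2 ⟨norm_pos_iff.2 hE, hy2⟩
      · rw [show discMT α β (discMTinv α β y)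
          = (α * discMTinv α β y + β)
            / ((starRingEnd ℂ) β * discMTinv α β y + (starRingEnd ℂ) α) from rfl, hNum, hDx,
          div_eq_iff (inv_ne_zero hE)]
  · -- sum of arc lengths
    rw [hU, hV, ← ENNReal.ofReal_add (mul_nonneg zero_le_two (Real.arccos_nonneg _))
      (mul_nonneg zero_le_two (Real.arccos_nonneg _))]
    · congr 1
      rw [Real.arccos_neg]
      ring
  · rw [hV, ENNReal.ofReal_lt_ofReal_iff Real.pi_pos]
    have h2 := Real.arccos_lt_pi_div_two.2 (div_pos hβpos hαpos)
    linarith
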